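/- arXiv:1504.04404 — 3 statements merged into one kernel-verified Lean document; each statement's English description precedes it below -/
import Mathlib

section
/- Let E n satisfy E 0 = 1, E 1 = 4, E n = 2 * C(n-1) + E(n-2) + 2^(n-1), where C 0 = 1, C 1 = 4, C n = 3 C(n-1) + 2 C(n-2). Then Filter.Tendsto (fun n => (E n : ℝ) / (4 : ℝ)^n) Filter.atTop (nhds 0). -/
/-! Both `C n` and `E n` grow no faster than `(18/5)^n`: the characteristic root of
`C (n+2) = 3 C (n+1) + 2 C n` is `(3 + √17)/2 < 18/5`, and `E (n+2) = E n + O((18/5)^n)`.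
Since `18/5 < 4`, the ratio `E n / 4^n` tends to `0`. -/

def C : ℕ → ℕ
  | 0 => 1
  | 1 => 4
  | n + 2 => 3 * C (n + 1) + 2 * C n

def E : ℕ → ℕ
  | 0 => 1
  | 1 => 4
  | n + 2 => 2 * C (n + 1) + E n + 2 ^ (n + 1)

open Asymptotics Filter

theorem le_mul_pow_of_two_step_le {u : ℕ → ℝ} {a b c K r : ℝ} (ha : 0 ≤ a) (hb : 0 ≤ b)
    (hr : 0 ≤ r) (hchar : K * (a * r + b) + c ≤ K * r ^ 2) (h0 : u 0 ≤ K) (h1 : u 1 ≤ K * r)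
    (hrec : ∀ n, u (n + 2) ≤ a * u (n + 1) + b * u n + c * r ^ n) (n : ℕ) :
    u n ≤ K * r ^ n := by
  induction n using Nat.twoStepInduction with
  | zero => simpa using h0
  | one => simpa using h1
  | more n ih₀ ih₁ =>
    calc u (n + 2) ≤ a * u (n + 1) + b * u n + c * r ^ n := hrec n
      _ ≤ a * (K * r ^ (n + 1)) + b * (K * r ^ n) + c * r ^ n := by gcongr
      _ = (K * (a * r + b) + c) * r ^ n := by ring
      _ ≤ K * r ^ 2 * r ^ n := by gcongr
      _ = K * r ^ (n + 2) := by ring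

theorem C_le_mul_pow (n : ℕ) : (C n : ℝ) ≤ 4 * (18 / 5) ^ n := by
  refine le_mul_pow_of_two_step_le (u := fun n => (C n : ℝ)) (a := 3) (b := 2) (c := 0)
    (by norm_num) (by norm_num) (by norm_num) (by norm_num) (by norm_num [C]) (by norm_num [C])
    (fun n => ?_) n
  simp [C]

theorem E_le_mul_pow (n : ℕ) : (E n : ℝ) ≤ 4 * (18 / 5) ^ n := by
  -- `154/5 = 2 * 4 * (18/5) + 2` absorbs `2 C (n+1) + 2^(n+1)`.
  refine le_mul_pow_of_two_step_le (u := fun n => (E n : ℝ)) (a := 0) (b := 1) (c := 154 / 5)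
    (by norm_num) (by norm_num) (by norm_num) (by norm_num) (by norm_num [E]) (by norm_num [E])
    (fun n => ?_) n
  have hC := C_le_mul_pow (n + 1)
  have h2 : (2 : ℝ) ^ n ≤ (18 / 5) ^ n := pow_le_pow_left₀ (by norm_num) (by norm_num) n
  push_cast [E, pow_succ] at hC ⊢
  linarith

theorem density_rows_tendsto_zero :
    Filter.Tendsto (fun n => (E n : ℝ) / (4 : ℝ) ^ n) Filter.atTop (nhds 0) := by
  have hE : (fun n => (E n : ℝ)) =O[atTop] fun n => (18 / 5 : ℝ) ^ n :=
    IsBigO.of_bound 4 <| Eventually.of_forall fun n => by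
      simpa [abs_of_nonneg (pow_nonneg (by norm_num : (0 : ℝ) ≤ 18 / 5) n)] using E_le_mul_pow n
  exact (hE.trans_isLittleO (isLittleO_pow_pow_of_lt_left (by norm_num) (by norm_num))
    ).tendsto_div_nhds_zero
end

section
/- The solution of the recurrence C n = 3 C(n-1) + 2 C(n-2), C 0 = 1, C 1 = 4, satisfies: Filter.Tendsto (fun n => (C (n+1) : ℝ) / (C n : ℝ)) Filter.atTop (nhds ((3 + Real.sqrt 17)/2)). -/
/-! Both roots φ, ψ = (3 ± √17)/2 of x² = 3x + 2 are real with |ψ| < φ, so Binet's formula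
C n = a φⁿ + b ψⁿ (with a ≠ 0) gives C (n+1) / C n = (a φ + b ψ (ψ/φ)ⁿ) / (a + b (ψ/φ)ⁿ) → φ. -/

open Filter Topology

theorem eq_pow_add_pow_of_recurrence {R : Type*} [CommRing R] {u : ℕ → R} {p q φ ψ a b : R}
    (hφ : φ ^ 2 = p * φ + q) (hψ : ψ ^ 2 = p * ψ + q)
    (hu : ∀ n, u (n + 2) = p * u (n + 1) + q * u n)
    (h0 : u 0 = a + b) (h1 : u 1 = a * φ + b * ψ) (n : ℕ) :
    u n = a * φ ^ n + b * ψ ^ n := by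
  induction n using Nat.twoStepInduction with
  | zero => simpa using h0
  | one => simpa using h1
  | more n ih₀ ih₁ =>
    rw [hu, ih₀, ih₁]
    linear_combination -(a * φ ^ n) * hφ - (b * ψ ^ n) * hψ

theorem tendsto_pow_add_pow_ratio {a b φ ψ : ℝ} (ha : a ≠ 0) (hψφ : |ψ| < |φ|) :
    Tendsto (fun n : ℕ => (a * φ ^ (n + 1) + b * ψ ^ (n + 1)) / (a * φ ^ n + b * ψ ^ n))
      atTop (𝓝 φ) := by
  have hφ : φ ≠ 0 := abs_pos.mp ((abs_nonneg ψ).trans_lt hψφ)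
  have hr : Tendsto (fun n : ℕ => (ψ / φ) ^ n) atTop (𝓝 0) :=
    tendsto_pow_atTop_nhds_zero_of_abs_lt_one <| by
      rwa [abs_div, div_lt_one (abs_pos.mpr hφ)]
  have hlim : Tendsto (fun n : ℕ => (a * φ + b * ψ * (ψ / φ) ^ n) / (a + b * (ψ / φ) ^ n))
      atTop (𝓝 ((a * φ + b * ψ * 0) / (a + b * 0))) :=
    (tendsto_const_nhds.add (tendsto_const_nhds.mul hr)).div
      (tendsto_const_nhds.add (tendsto_const_nhds.mul hr)) (by simpa using ha)
  rw [show (a * φ + b * ψ * 0) / (a + b * 0) = φ by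
    simp only [mul_zero, add_zero, mul_div_cancel_left₀ φ ha]] at hlim
  refine hlim.congr fun n => ?_
  have hφn : φ ^ n ≠ 0 := pow_ne_zero n hφ
  rw [← mul_div_mul_right _ _ hφn, div_pow]
  congr 1
  · field_simp
    ring
  · field_simp

theorem C_add_two (n : ℕ) : (C (n + 2) : ℝ) = 3 * C (n + 1) + 2 * C n := by
  simp [C]

theorem C_ratio_limit :
    Filter.Tendsto (fun n => (C (n + 1) : ℝ) / (C n : ℝ)) Filter.atTop
      (nhds ((3 + Real.sqrt 17) / 2)) := by
  set s := Real.sqrt 17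
  have hs2 : s ^ 2 = 17 := Real.sq_sqrt (by norm_num)
  have hs4 : 4 < s := by nlinarith [Real.sqrt_nonneg 17]
  have hs : s ≠ 0 := by positivity
  have hbinet := eq_pow_add_pow_of_recurrence (u := fun n => (C n : ℝ))
    (φ := (3 + s) / 2) (ψ := (3 - s) / 2) (a := (5 + s) / (2 * s)) (b := (s - 5) / (2 * s))
    (by linear_combination hs2 / 4) (by linear_combination hs2 / 4) C_add_two
    (by field_simp; simp [C]; ring) (by field_simp; simp [C]; ring)
  simp only [hbinet]
  refine tendsto_pow_add_pow_ratio (by positivity) ?_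
  rw [abs_of_neg (by linarith), abs_of_pos (by linarith)]
  linarith
end

section
/- Let r n k = R n k % 2 be the Pascal rhombus mod 2. The number of k with |k| < 2^n and r (2^n) k = 1 equals (2^(n+2) - (-1)^n)/3 for all n ≥ 0; equivalently, 3 times this count equals 2^(n+2) - (-1)^n as an integer. -/
/-!
Modulo 2 the rows of the rhombus are the Fibonacci polynomials `Pₙ` in `t = x⁻¹ + 1 + x`, and
their doubling formulas together with `f(x)² = f(x²)` in characteristic 2 give
`P₂ᵢ(x) = t · Pᵢ(x²)` and `P₂ᵢ₊₁(x) = Pᵢ(x²) + Pᵢ₊₁(x²)`. Hence the odd entries of row `2i` are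
the odd entries of row `i` (even columns) together with the parity changes of row `i` (odd
columns), and row `2i` has twice as many parity changes as row `i` has odd entries. With `aₙ`, `cₙ`
the numbers of odd entries and of parity changes in row `2ⁿ`, this gives `aₙ₊₁ = aₙ + cₙ` and
`cₙ₊₁ = 2aₙ` with `a₀ = 1`, `c₀ = 2`, whose solution is `3aₙ = 2ⁿ⁺² - (-1)ⁿ`.
-/

def R : ℕ → ℤ → ℕ
  | 0, _ => 0
  | 1, k => if k = 0 then 1 else 0
  | n + 2, k => R (n + 1) (k - 1) + R (n + 1) k + R (n + 1) (k + 1) + R n k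

open Finset

theorem R_add_two (n : ℕ) (k : ℤ) :
    R (n + 2) k = R (n + 1) (k - 1) + R (n + 1) k + R (n + 1) (k + 1) + R n k := rfl

theorem R_eq_zero_of_le_abs : ∀ (n : ℕ) (k : ℤ), (n : ℤ) ≤ |k| → R n k = 0
  | 0, _, _ => rfl
  | 1, k, h => if_neg (by rintro rfl; simp at h)
  | n + 2, k, h => by
    rw [le_abs] at h
    rw [R_add_two, R_eq_zero_of_le_abs (n + 1) (k - 1), R_eq_zero_of_le_abs (n + 1) k,
      R_eq_zero_of_le_abs (n + 1) (k + 1), R_eq_zero_of_le_abs n k] <;>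
    · rw [le_abs]; push_cast at h ⊢; omega

theorem mem_Ioo_of_R_mod_two_eq_one {n : ℕ} {k : ℤ} (h : R n k % 2 = 1) :
    k ∈ Ioo (-(n : ℤ)) n := by
  by_contra hk
  rw [R_eq_zero_of_le_abs n k (by rw [mem_Ioo] at hk; rw [le_abs]; omega)] at h
  simp at h

theorem R_two_mul_mod_two (i : ℕ) :
    (∀ j : ℤ, R (2 * i) (2 * j) % 2 = R i j % 2) ∧
    (∀ j : ℤ, R (2 * i) (2 * j + 1) % 2 = (R i j + R i (j + 1)) % 2) ∧
    (∀ j : ℤ, R (2 * i + 1) (2 * j) % 2 = (R i j + R (i + 1) j) % 2) ∧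
    (∀ j : ℤ, R (2 * i + 1) (2 * j + 1) % 2 = 0) := by
  induction i with
  | zero =>
    refine ⟨fun j => rfl, fun j => by simp [R], fun j => ?_, fun j => ?_⟩ <;>
    · simp only [R]; split_ifs <;> omega
  | succ i ih =>
    obtain ⟨ee, eo, oe, oo⟩ := ih
    -- `ring_nf` brings the row and column indices to one normal form, so that `omega` sees
    -- the recurrence and the induction hypotheses as statements about the same atoms.
    have ee' : ∀ j, R (2 * i + 2) (2 * j) % 2 = R (i + 1) j % 2 := fun j => by
      have := R_add_two (2 * i) (2 * j)
      have := oo (j - 1); have := oe j; have := oo j; have := ee j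
      ring_nf at *; omega
    have eo' : ∀ j, R (2 * i + 2) (2 * j + 1) % 2 = (R (i + 1) j + R (i + 1) (j + 1)) % 2 :=
      fun j => by
      have := R_add_two (2 * i) (2 * j + 1)
      have := oe j; have := oo j; have := oe (j + 1); have := eo j
      ring_nf at *; omega
    have oe' : ∀ j, R (2 * i + 3) (2 * j) % 2 = (R (i + 1) j + R (i + 2) j) % 2 := fun j => by
      have := R_add_two (2 * i + 1) (2 * j)
      have := eo' (j - 1); have := ee' j; have := eo' j; have := oe j; have := R_add_two i j
      ring_nf at *; omega
    have oo'' : ∀ j, R (2 * i + 3) (2 * j + 1) % 2 = 0 := fun j => by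
      have := R_add_two (2 * i + 1) (2 * j + 1)
      have := eo' j; have := ee' j; have := ee' (j + 1); have := oo j
      ring_nf at *; omega
    exact ⟨ee', eo', oe', oo''⟩

theorem card_filter_Ico_two_mul (p : ℤ → Prop) [DecidablePred p] (a b : ℤ) :
    #{k ∈ Ico (2 * a) (2 * b) | p k} =
      #{j ∈ Ico a b | p (2 * j)} + #{j ∈ Ico a b | p (2 * j + 1)} := by
  have h2 : Function.Injective (fun j : ℤ => 2 * j) := fun _ _ h => by simpa using h
  have h21 : Function.Injective (fun j : ℤ => 2 * j + 1) := fun _ _ h => by simpa using h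
  rw [← card_image_of_injective {j ∈ Ico a b | p (2 * j)} h2,
    ← card_image_of_injective {j ∈ Ico a b | p (2 * j + 1)} h21, ← card_union_of_disjoint]
  · congr 1
    ext k
    simp only [mem_filter, mem_Ico, mem_union, mem_image]
    constructor
    · rintro ⟨hk, hp⟩
      obtain ⟨j, rfl | rfl⟩ := Int.even_or_odd' k
      · exact Or.inl ⟨j, ⟨by omega, hp⟩, rfl⟩
      · exact Or.inr ⟨j, ⟨by omega, hp⟩, rfl⟩
    · rintro (⟨j, ⟨hj, hp⟩, rfl⟩ | ⟨j, ⟨hj, hp⟩, rfl⟩) <;> exact ⟨by omega, hp⟩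
  · simp only [disjoint_left, mem_image]
    rintro _ ⟨a, -, rfl⟩ ⟨b, -, h⟩
    omega

theorem filter_R_mod_two_eq_one_of_subset {n : ℕ} {s : Finset ℤ} (hs : Ioo (-(n : ℤ)) n ⊆ s) :
    {k ∈ s | R n k % 2 = 1} = {k ∈ Ioo (-(n : ℤ)) n | R n k % 2 = 1} := by
  ext k
  simp only [mem_filter]
  exact ⟨fun ⟨_, h⟩ => ⟨mem_Ioo_of_R_mod_two_eq_one h, h⟩, fun ⟨hk, h⟩ => ⟨hs hk, h⟩⟩

noncomputable def oddCount (n : ℕ) : ℕ := #{k ∈ Ioo (-(n : ℤ)) n | R n k % 2 = 1}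

noncomputable def parityChangeCount (n : ℕ) : ℕ :=
  #{k ∈ Ico (-(n : ℤ)) n | (R n k + R n (k + 1)) % 2 = 1}

theorem oddCount_one : oddCount 1 = 1 := by decide

theorem parityChangeCount_one : parityChangeCount 1 = 2 := by decide

theorem oddCount_two_mul (i : ℕ) : oddCount (2 * i) = oddCount i + parityChangeCount i := by
  obtain ⟨ee, eo, -, -⟩ := R_two_mul_mod_two i
  rw [oddCount, ← filter_R_mod_two_eq_one_of_subset Ioo_subset_Ico_self, Nat.cast_mul,
    Nat.cast_two, ← mul_neg, card_filter_Ico_two_mul, oddCount,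
    ← filter_R_mod_two_eq_one_of_subset Ioo_subset_Ico_self, parityChangeCount]
  simp only [ee, eo]

theorem parityChangeCount_two_mul (i : ℕ) : parityChangeCount (2 * i) = 2 * oddCount i := by
  obtain ⟨ee, eo, -, -⟩ := R_two_mul_mod_two i
  have shift : #{j ∈ Ico (-(i : ℤ)) i | R i (j + 1) % 2 = 1} = oddCount i := by
    rw [oddCount, ← filter_R_mod_two_eq_one_of_subset (s := Ico (-i + 1) (i + 1)),
      ← map_add_right_Ico, filter_map, card_map]
    · rfl
    · intro k; simp only [mem_Ioo, mem_Ico]; omega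
  rw [parityChangeCount, Nat.cast_mul, Nat.cast_two, ← mul_neg, card_filter_Ico_two_mul,
    two_mul (oddCount i)]
  nth_rw 1 [← shift]
  rw [oddCount, ← filter_R_mod_two_eq_one_of_subset Ioo_subset_Ico_self]
  congr 1 <;> refine congrArg card (filter_congr fun j _ => ?_)
  · have := ee j; have := eo j; omega
  · rw [show 2 * j + 1 + 1 = 2 * (j + 1) by ring]
    have := eo j; have := ee (j + 1); omega

theorem oddCount_two_pow (n : ℕ) :
    3 * (oddCount (2 ^ n) : ℤ) = 2 ^ (n + 2) - (-1) ^ n ∧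
      3 * (parityChangeCount (2 ^ n) : ℤ) = 2 ^ (n + 2) + 2 * (-1) ^ n := by
  induction n with
  | zero => simp [oddCount_one, parityChangeCount_one]
  | succ n ih =>
    rw [pow_succ', oddCount_two_mul, parityChangeCount_two_mul]
    push_cast
    exact ⟨by linear_combination ih.1 + ih.2, by linear_combination 2 * ih.1⟩

theorem ones_in_row_pow_two (n : ℕ) :
    3 * (((Finset.Icc (-(2 ^ n : ℤ) + 1) ((2 ^ n : ℤ) - 1)).filter
        (fun k => R (2 ^ n) k % 2 = 1)).card : ℤ) = 2 ^ (n + 2) - (-1) ^ n := by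
  have hIoo :
      Ioo (-((2 ^ n : ℕ) : ℤ)) (2 ^ n : ℕ) ⊆ Icc (-(2 ^ n : ℤ) + 1) ((2 ^ n : ℤ) - 1) := by
    intro k; simp only [mem_Ioo, mem_Icc]; push_cast; omega
  rw [filter_R_mod_two_eq_one_of_subset hIoo]
  exact (oddCount_two_pow n).1
end
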